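/- A connected graph G of order n with maximum degree Δ(G) satisfies rvc(G) ≤ n − Δ(G). -/

import Mathlib

/-!
Root a breadth-first spanning tree `T` at a vertex `r` of maximum degree. Any two vertices are
joined inside their tree paths to `r`, and every inner vertex of such a path is an internal
(non-leaf) vertex of `T`; giving the internal vertices distinct colours is therefore a rainbow
vertex colouring. An internal vertex at distance at least two from `r`, or `r` itself, is left in
place, and an internal vertex at distance one is sent to a deepest descendant, a leaf at distance
at least two. Two internal vertices at distance one have no common descendant, so this injects the
internal vertices into the `n - Δ` vertices not adjacent to `r`.
-/

open SimpleGraph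

/-- A coloring `c` is a rainbow vertex-coloring witness with `k` colors: any two vertices are
joined by a path whose internal vertices have distinct colors, all among the first `k` colors. -/
def IsRainbowVColoring {V : Type*} (G : SimpleGraph V) (c : V → ℕ) (k : ℕ) : Prop :=
  ∀ u v : V, ∃ p : G.Walk u v, p.IsPath ∧ (p.support.tail.dropLast.map c).Nodup ∧
    ∀ w ∈ p.support.tail.dropLast, c w < k

/-- The rainbow vertex-connection number. -/
noncomputable def rvc {V : Type*} (G : SimpleGraph V) : ℕ :=
  sInf {k : ℕ | ∃ c : V → ℕ, IsRainbowVColoring G c k}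

namespace SimpleGraph

theorem Walk.IsPath.ne_of_mem_support_tail_dropLast {V : Type*} {G : SimpleGraph V}
    {u w z : V} {p : G.Walk u w} (hp : p.IsPath) (hz : z ∈ p.support.tail.dropLast) :
    z ≠ u ∧ z ≠ w := by
  have hnodup := hp.support_nodup
  rw [← p.cons_tail_support] at hnodup
  have := List.dropLast_concat_getLast p.support_ne_nil
  exact ⟨by grind, by grind [Walk.getLast_support, List.tail_dropLast]⟩

structure BFSTree {V : Type*} (G : SimpleGraph V) (root : V) where
  parent : V → V
  parent_root : parent root = root
  adj_parent : ∀ u ≠ root, G.Adj u (parent u)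
  dist_parent_lt : ∀ u ≠ root, G.dist (parent u) root < G.dist u root

namespace BFSTree

variable {V : Type*} {G : SimpleGraph V} {r : V} (T : G.BFSTree r)

theorem _root_.SimpleGraph.Connected.nonempty_bfsTree (hG : G.Connected) (r : V) :
    Nonempty (G.BFSTree r) := by
  have hstep : ∀ u ≠ r, ∃ w, G.Adj u w ∧ G.dist w r < G.dist u r := fun u hu => by
    obtain ⟨p, hp⟩ := hG.exists_walk_length_eq_dist u r
    cases p with
    | nil => exact absurd rfl hu
    | cons h q => exact ⟨_, h, (dist_le q).trans_lt (by simp [← hp])⟩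
  choose next hnext using hstep
  classical
  exact ⟨{ parent := fun u => if hu : u = r then r else next u hu
           parent_root := by simp
           adj_parent := fun u hu => by simpa [hu] using (hnext u hu).1
           dist_parent_lt := fun u hu => by simpa [hu] using (hnext u hu).2 }⟩

def IsAncestor (a u : V) : Prop := ∃ k, T.parent^[k] u = a

def IsInternal (a : V) : Prop := ∃ u ≠ a, T.IsAncestor a u

variable {T}

theorem IsAncestor.refl (u : V) : T.IsAncestor u u := ⟨0, rfl⟩

theorem IsAncestor.trans {a b u : V} (hab : T.IsAncestor a b) (hbu : T.IsAncestor b u) :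
    T.IsAncestor a u := by
  obtain ⟨k, rfl⟩ := hab
  obtain ⟨m, rfl⟩ := hbu
  exact ⟨k + m, Function.iterate_add_apply _ _ _ _⟩

theorem isAncestor_parent (u : V) : T.IsAncestor (T.parent u) u := ⟨1, rfl⟩

theorem IsAncestor.total {a b u : V} (ha : T.IsAncestor a u) (hb : T.IsAncestor b u) :
    T.IsAncestor a b ∨ T.IsAncestor b a := by
  obtain ⟨k, rfl⟩ := ha
  obtain ⟨m, rfl⟩ := hb
  rcases le_total k m with h | h
  · exact Or.inr ⟨m - k, by rw [← Function.iterate_add_apply, Nat.sub_add_cancel h]⟩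
  · exact Or.inl ⟨k - m, by rw [← Function.iterate_add_apply, Nat.sub_add_cancel h]⟩

theorem IsAncestor.dist_lt {a u : V} (h : T.IsAncestor a u) (hne : u ≠ a) :
    G.dist a r < G.dist u r := by
  obtain ⟨k, rfl⟩ := h
  induction k generalizing u with
  | zero => exact absurd rfl hne
  | succ k ih =>
    rw [Function.iterate_succ_apply] at hne ⊢
    have hur : u ≠ r := by
      rintro rfl
      simp [T.parent_root, Function.iterate_fixed] at hne
    have := T.dist_parent_lt u hur
    by_cases hpu : T.parent u = T.parent^[k] (T.parent u)
    · rwa [← hpu]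
    · exact (ih hpu).trans this

theorem IsAncestor.eq_of_dist_eq {a u : V} (h : T.IsAncestor a u)
    (hd : G.dist a r = G.dist u r) : a = u :=
  by_contra fun hne => (h.dist_lt (Ne.symm hne)).ne hd

variable (T)

theorem exists_walk_to_root (u : V) : ∃ p : G.Walk u r, ∀ z ∈ p.support, T.IsAncestor z u := by
  by_cases hu : u = r
  · subst hu
    exact ⟨.nil, by simp [IsAncestor.refl]⟩
  obtain ⟨p, hp⟩ := exists_walk_to_root (T.parent u)
  refine ⟨.cons (T.adj_parent u hu) p, fun z hz => ?_⟩
  rw [Walk.support_cons, List.mem_cons] at hz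
  rcases hz with rfl | hz
  · exact .refl _
  · exact (hp z hz).trans (isAncestor_parent u)
termination_by G.dist u r
decreasing_by exact T.dist_parent_lt u hu

theorem exists_walk_through_internal (u w : V) :
    ∃ p : G.Walk u w, ∀ z ∈ p.support, z ≠ u → z ≠ w → T.IsInternal z := by
  obtain ⟨p, hp⟩ := T.exists_walk_to_root u
  obtain ⟨q, hq⟩ := T.exists_walk_to_root w
  refine ⟨p.append q.reverse, fun z hz hzu hzw => ?_⟩
  rw [Walk.mem_support_append_iff, Walk.support_reverse, List.mem_reverse] at hz
  rcases hz with hz | hz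
  · exact ⟨u, Ne.symm hzu, hp z hz⟩
  · exact ⟨w, Ne.symm hzw, hq z hz⟩

variable [Fintype V]

theorem exists_deepest_descendant (a : V) :
    ∃ l, T.IsAncestor a l ∧ ∀ u, T.IsAncestor a u → G.dist u r ≤ G.dist l r := by
  classical
  obtain ⟨l, hl, hmax⟩ := Finset.exists_max_image (Finset.univ.filter (T.IsAncestor a))
    (G.dist · r) ⟨a, by simpa using IsAncestor.refl a⟩
  exact ⟨l, by simpa using hl, fun u hu => hmax u (by simpa using hu)⟩

theorem exists_injOn_isInternal_dist_ne_one :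
    ∃ f : V → V, Set.MapsTo f {a | T.IsInternal a} {u | G.dist u r ≠ 1} ∧
      Set.InjOn f {a | T.IsInternal a} := by
  choose l hl_anc hl_max using T.exists_deepest_descendant
  have hl_not_internal : ∀ a, ¬ T.IsInternal (l a) := fun a ⟨u, hu, hanc⟩ =>
    (hanc.dist_lt hu).not_ge (hl_max a u ((hl_anc a).trans hanc))
  have hl_dist : ∀ a, T.IsInternal a → G.dist a r < G.dist (l a) r := fun a ⟨u, hu, hanc⟩ =>
    (hanc.dist_lt hu).trans_le (hl_max a u hanc)
  classical
  refine ⟨fun a => if G.dist a r = 1 then l a else a, fun a ha => ?_, fun a ha b hb hab => ?_⟩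
  · show G.dist (if G.dist a r = 1 then l a else a) r ≠ 1
    split_ifs with h
    · have := hl_dist a ha
      omega
    · exact h
  · by_cases hda : G.dist a r = 1 <;> by_cases hdb : G.dist b r = 1 <;>
      simp only [hda, hdb, if_true, if_false] at hab
    · rcases (hl_anc a).total (hab ▸ hl_anc b) with h | h
      · exact h.eq_of_dist_eq (hda.trans hdb.symm)
      · exact (h.eq_of_dist_eq (hdb.trans hda.symm)).symm
    · exact absurd (hab ▸ hb) (hl_not_internal a)
    · exact absurd (hab ▸ ha) (hl_not_internal b)
    · exact hab

variable [DecidableRel G.Adj]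

theorem ncard_setOf_isInternal_le :
    {a | T.IsInternal a}.ncard ≤ Fintype.card V - G.degree r := by
  obtain ⟨f, hmaps, hinj⟩ := T.exists_injOn_isInternal_dist_ne_one
  have hcompl : {u | G.dist u r ≠ 1} = (G.neighborSet r)ᶜ := by
    ext u
    simp [dist_eq_one_iff_adj, adj_comm]
  calc {a | T.IsInternal a}.ncard ≤ {u | G.dist u r ≠ 1}.ncard :=
        Set.ncard_le_ncard_of_injOn f hmaps hinj
    _ = Fintype.card V - G.degree r := by
        rw [hcompl, Set.ncard_compl, ← card_neighborSet_eq_degree, Set.ncard_eq_toFinset_card',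
          Nat.card_eq_fintype_card, Set.toFinset_card]

end BFSTree

end SimpleGraph

theorem rvc_le_ncard {V : Type*} [Finite V] (G : SimpleGraph V) (S : Set V)
    (hS : ∀ u w, ∃ p : G.Walk u w, ∀ z ∈ p.support, z ≠ u → z ≠ w → z ∈ S) :
    rvc G ≤ S.ncard := by
  classical
  let c : V → ℕ := fun z => if h : z ∈ S then Finite.equivFin S ⟨z, h⟩ else 0
  have hc_inj : Set.InjOn c S := fun x hx y hy hxy => by
    simp only [c, hx, hy, dite_true, Fin.val_inj] at hxy
    exact congrArg Subtype.val ((Finite.equivFin S).injective hxy)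
  have hc_lt : ∀ z ∈ S, c z < S.ncard := fun z hz => by
    simp [c, hz, ← Nat.card_coe_set_eq]
  refine Nat.sInf_le ⟨c, fun u w => ?_⟩
  obtain ⟨p, hp⟩ := hS u w
  have hinner : ∀ z ∈ p.bypass.support.tail.dropLast, z ∈ S := fun z hz => by
    obtain ⟨hzu, hzw⟩ := p.bypass_isPath.ne_of_mem_support_tail_dropLast hz
    exact hp z (p.support_bypass_subset_support
      (List.mem_of_mem_tail (List.dropLast_subset _ hz))) hzu hzw
  refine ⟨p.bypass, p.bypass_isPath, ?_, fun z hz => hc_lt z (hinner z hz)⟩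
  exact (p.bypass_isPath.support_nodup.sublist
    ((List.dropLast_sublist _).trans (List.tail_sublist _))).map_on
    fun x hx y hy => hc_inj (hinner x hx) (hinner y hy)

theorem stmt_5 {V : Type*} [Fintype V] (G : SimpleGraph V) [DecidableRel G.Adj]
    (hG : G.Connected) :
    rvc G ≤ Fintype.card V - G.maxDegree := by
  have := hG.nonempty
  obtain ⟨r, hr⟩ := G.exists_maximal_degree_vertex
  obtain ⟨T⟩ := hG.nonempty_bfsTree r
  calc rvc G ≤ {a | T.IsInternal a}.ncard := rvc_le_ncard G _ T.exists_walk_through_internal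
    _ ≤ Fintype.card V - G.maxDegree := hr ▸ T.ncard_setOf_isInternal_le
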